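/- arXiv:1404.2824 — 3 statements merged into one kernel-verified Lean document; each statement's English description precedes it below -/
import Mathlib

section
/- The generating function of the numbers pnw(n,4) satisfies the formal power series identity (1 − x³)·(1 − x)³ · ∑_{n≥1} pnw(n,4)·xⁿ = x⁴ (in the ring of formal power series over the integers). -/
/-!
A prefix normal word with a 1 starts with 1, so one of density 4 is `1 0^g₁ 1 0^g₂ 1 0^g₃ 1 0^g₄`.
It is prefix normal iff `g₁ ≤ g₂` and `g₁ ≤ g₃`: the factors `1 0^g₂ 1` and `1 0^g₃ 1` must not beat
the prefix `1 0^g₁ 1`, and then every factor with three 1s is at least as long as the prefix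
`1 0^g₁ 1 0^g₂ 1`. Writing `g₂ = g₁ + a`, `g₃ = g₁ + b`, the words of length `n` correspond to the
solutions of `3 g₁ + a + b + g₄ = n - 4`, whose generating series is `1 / ((1 - X³)(1 - X)³)`:
multiplying by `1 - Xᵏ` removes a variable of weight `k`.
-/

/-- A binary word (list of Booleans, `true` = 1) is prefix normal if no substring
has more 1s than the prefix of the same length. -/
def IsPrefixNormal (w : List Bool) : Prop :=
  ∀ u : List Bool, u <:+: w → u.count true ≤ (w.take u.length).count true

/-- The number of prefix normal words of length `n` and density `d` (number of 1s). -/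
noncomputable def pnwd (n d : ℕ) : ℕ :=
  Nat.card {w : List Bool // w.length = n ∧ w.count true = d ∧ IsPrefixNormal w}

open List PowerSeries

theorem isPrefixNormal_iff_count_take_add_le (w : List Bool) :
    IsPrefixNormal w ↔ ∀ i j,
      (w.take (i + j)).count true ≤ (w.take i).count true + (w.take j).count true := by
  constructor
  · intro hw i j
    have hinfix : (w.drop i).take j <:+: w :=
      (take_prefix j _).isInfix.trans (drop_suffix i w).isInfix
    have hmono := (take_sublist_take_left (l := w) (length_take_le j (w.drop i))).count_le true
    rw [take_add, count_append]
    have := hw _ hinfix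
    omega
  · rintro hw u ⟨s, t, rfl⟩
    have h := hw s.length u.length
    rw [append_assoc, take_left, ← append_assoc, take_left' (by simp), count_append] at h
    omega

theorem IsPrefixNormal.exists_eq_true_cons {w : List Bool} (hw : IsPrefixNormal w)
    (h : true ∈ w) : ∃ t, w = true :: t := by
  have := hw [true] ((singleton_infix_iff _ _).mpr h)
  match w with
  | b :: t => cases b <;> simp_all

def gapWord (g₁ g₂ g₃ g₄ : ℕ) : List Bool :=
  true :: (replicate g₁ false ++ true :: (replicate g₂ false ++
    true :: (replicate g₃ false ++ true :: replicate g₄ false)))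

theorem length_gapWord (g₁ g₂ g₃ g₄ : ℕ) :
    (gapWord g₁ g₂ g₃ g₄).length = g₁ + g₂ + g₃ + g₄ + 4 := by
  simp only [gapWord, length_cons, length_append, length_replicate]
  ring

theorem count_true_gapWord (g₁ g₂ g₃ g₄ : ℕ) : (gapWord g₁ g₂ g₃ g₄).count true = 4 := by
  simp [gapWord, count_replicate]

theorem count_true_take_true_cons_replicate (g n : ℕ) :
    ((true :: replicate g false).take n).count true = min n 1 := by
  cases n <;> simp [take_replicate, count_replicate]

theorem count_true_take_gapWord (g₁ g₂ g₃ g₄ n : ℕ) :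
    ((gapWord g₁ g₂ g₃ g₄).take n).count true =
      min n 1 + min (n - (g₁ + 1)) 1 + min (n - (g₁ + g₂ + 2)) 1
        + min (n - (g₁ + g₂ + g₃ + 3)) 1 := by
  have hsplit : gapWord g₁ g₂ g₃ g₄ = (true :: replicate g₁ false) ++ ((true :: replicate g₂ false)
      ++ ((true :: replicate g₃ false) ++ (true :: replicate g₄ false))) := by
    simp [gapWord]
  simp only [hsplit, take_append, count_append, count_true_take_true_cons_replicate,
    length_cons, length_replicate]
  omega

/- The prefix count in terms of the positions of the four 1s: in this form `omega` decides the
prefix normality inequalities quickly, unlike with the `min` formula above. -/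
theorem count_true_take_gapWord_thresholds (g₁ g₂ g₃ g₄ n : ℕ) :
    ((gapWord g₁ g₂ g₃ g₄).take n).count true ≤ 4 ∧
      (1 ≤ ((gapWord g₁ g₂ g₃ g₄).take n).count true ↔ 1 ≤ n) ∧
      (2 ≤ ((gapWord g₁ g₂ g₃ g₄).take n).count true ↔ g₁ + 2 ≤ n) ∧
      (3 ≤ ((gapWord g₁ g₂ g₃ g₄).take n).count true ↔ g₁ + g₂ + 3 ≤ n) ∧
      (4 ≤ ((gapWord g₁ g₂ g₃ g₄).take n).count true ↔ g₁ + g₂ + g₃ + 4 ≤ n) := by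
  rw [count_true_take_gapWord]
  omega

theorem isPrefixNormal_gapWord_iff {g₁ g₂ g₃ g₄ : ℕ} :
    IsPrefixNormal (gapWord g₁ g₂ g₃ g₄) ↔ g₁ ≤ g₂ ∧ g₁ ≤ g₃ := by
  have P := count_true_take_gapWord_thresholds g₁ g₂ g₃ g₄
  rw [isPrefixNormal_iff_count_take_add_le]
  constructor
  · intro h
    have h₂ := h (g₁ + 1) (g₂ + 2)
    have h₃ := h (g₁ + g₂ + 2) (g₃ + 2)
    have := P (g₁ + 1); have := P (g₂ + 2); have := P (g₁ + 1 + (g₂ + 2))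
    have := P (g₁ + g₂ + 2); have := P (g₃ + 2); have := P (g₁ + g₂ + 2 + (g₃ + 2))
    omega
  · intro h i j
    have := P i; have := P j; have := P (i + j)
    omega

theorem replicate_false_append_true_cons_inj {a b : ℕ} {x y : List Bool}
    (h : replicate a false ++ true :: x = replicate b false ++ true :: y) : a = b ∧ x = y := by
  induction a generalizing b with
  | zero => cases b <;> simp_all [replicate_succ]
  | succ a ih =>
    cases b with
    | zero => simp [replicate_succ] at h
    | succ b => simpa [replicate_succ] using ih (by simpa [replicate_succ] using h)

theorem gapWord_inj {g₁ g₂ g₃ g₄ h₁ h₂ h₃ h₄ : ℕ}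
    (h : gapWord g₁ g₂ g₃ g₄ = gapWord h₁ h₂ h₃ h₄) :
    g₁ = h₁ ∧ g₂ = h₂ ∧ g₃ = h₃ ∧ g₄ = h₄ := by
  simp only [gapWord, cons.injEq, true_and] at h
  obtain ⟨e₁, h⟩ := replicate_false_append_true_cons_inj h
  obtain ⟨e₂, h⟩ := replicate_false_append_true_cons_inj h
  obtain ⟨e₃, h⟩ := replicate_false_append_true_cons_inj h
  exact ⟨e₁, e₂, e₃, by simpa using congrArg length h⟩

theorem exists_eq_replicate_false_append_true_cons {w : List Bool} {k : ℕ}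
    (h : w.count true = k + 1) :
    ∃ g t, w = replicate g false ++ true :: t ∧ t.count true = k := by
  induction w with
  | nil => simp at h
  | cons b w ih =>
    cases b with
    | true => exact ⟨0, w, rfl, by simpa using h⟩
    | false =>
      obtain ⟨g, t, rfl, ht⟩ := ih (by simpa using h)
      exact ⟨g + 1, t, rfl, ht⟩

theorem IsPrefixNormal.exists_gapWord_eq {w : List Bool} (hw : IsPrefixNormal w)
    (hc : w.count true = 4) : ∃ g₁ g₂ g₃ g₄, w = gapWord g₁ g₂ g₃ g₄ := by
  obtain ⟨w₁, rfl⟩ := hw.exists_eq_true_cons (count_pos_iff.mp (by omega))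
  obtain ⟨g₁, w₂, rfl, hc₂⟩ := exists_eq_replicate_false_append_true_cons (k := 2)
    (by simpa using hc)
  obtain ⟨g₂, w₃, rfl, hc₃⟩ := exists_eq_replicate_false_append_true_cons hc₂
  obtain ⟨g₃, w₄, rfl, hc₄⟩ := exists_eq_replicate_false_append_true_cons hc₃
  exact ⟨g₁, g₂, g₃, w₄.length, by
    simpa [gapWord, eq_replicate_iff] using count_eq_zero.mp hc₄⟩

section FiberSeries

variable {α : Type*}

-- Meaningful only for maps with finite fibres: `Nat.card` of an infinite type is `0`.
noncomputable def fiberSeries (φ : α → ℕ) : PowerSeries ℤ :=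
  mk fun m => Nat.card {x // φ x = m}

def prodWeight (k : ℕ) (φ : α → ℕ) (p : ℕ × α) : ℕ :=
  k * p.1 + φ p.2

theorem fiberSeries_add_const (φ : α → ℕ) (j : ℕ) :
    fiberSeries (fun x => φ x + j) = X ^ j * fiberSeries φ := by
  ext m
  rw [coeff_X_pow_mul', fiberSeries, fiberSeries, coeff_mk]
  split_ifs with h
  · rw [coeff_mk, Nat.card_congr (Equiv.subtypeEquivRight fun x =>
      (by omega : φ x + j = m ↔ φ x = m - j))]
  · have : IsEmpty {x // φ x + j = m} := ⟨fun x => h (by omega)⟩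
    simp

theorem fiberSeries_zero_unit : fiberSeries (fun _ : Unit => 0) = 1 := by
  ext m
  rw [fiberSeries, coeff_mk, coeff_one]
  split_ifs with h
  · subst h
    simp
  · have : IsEmpty {x : Unit // 0 = m} := ⟨fun x => h x.2.symm⟩
    simp

theorem finite_setOf_prodWeight_le {k : ℕ} (hk : 0 < k) {φ : α → ℕ}
    (hφ : ∀ m, {x | φ x ≤ m}.Finite) (m : ℕ) : {p | prodWeight k φ p ≤ m}.Finite :=
  ((Set.finite_Iic m).prod (hφ m)).subset fun p (hp : k * p.1 + φ p.2 ≤ m) =>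
    ⟨show p.1 ≤ m by nlinarith, show φ p.2 ≤ m by omega⟩

def prodWeightFiberEquiv (k : ℕ) (φ : α → ℕ) (m : ℕ) :
    {p // prodWeight k φ p = m} ≃ {x // φ x = m} ⊕ {p // prodWeight k φ p + k = m} where
  toFun
    | ⟨(0, x), h⟩ => .inl ⟨x, by simpa [prodWeight] using h⟩
    | ⟨(t + 1, x), h⟩ => .inr ⟨(t, x), by rw [← h, prodWeight, prodWeight]; ring⟩
  invFun
    | .inl ⟨x, h⟩ => ⟨(0, x), by simpa [prodWeight] using h⟩
    | .inr ⟨(t, x), h⟩ => ⟨(t + 1, x), by rw [← h, prodWeight, prodWeight]; ring⟩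
  left_inv := by rintro ⟨⟨_ | t, x⟩, h⟩ <;> rfl
  right_inv := by rintro (⟨x, h⟩ | ⟨⟨t, x⟩, h⟩) <;> rfl

theorem one_sub_X_pow_mul_fiberSeries_prodWeight {k : ℕ} (hk : 0 < k) {φ : α → ℕ}
    (hφ : ∀ m, {x | φ x ≤ m}.Finite) :
    (1 - X ^ k) * fiberSeries (prodWeight k φ) = fiberSeries φ := by
  rw [sub_mul, one_mul, ← fiberSeries_add_const, sub_eq_iff_eq_add']
  ext m
  have : Finite {x // φ x = m} := ((hφ m).subset fun x (hx : φ x = m) => hx.le).to_subtype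
  have : Finite {p // prodWeight k φ p + k = m} :=
    ((finite_setOf_prodWeight_le hk hφ m).subset fun p (hp : prodWeight k φ p + k = m) =>
      show prodWeight k φ p ≤ m by omega).to_subtype
  simp only [fiberSeries, map_add, coeff_mk]
  rw [Nat.card_congr (prodWeightFiberEquiv k φ m), Nat.card_sum]
  push_cast
  ring

end FiberSeries

/-- `(g₁, a, b, g₄) ↦ 3 g₁ + a + b + g₄`: the prefix normal words of density 4 are the words
`gapWord g₁ (g₁ + a) (g₁ + b) g₄`, of length `gapWeight (g₁, a, b, g₄) + 4`. -/
def gapWeight : ℕ × ℕ × ℕ × ℕ × Unit → ℕ :=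
  prodWeight 3 (prodWeight 1 (prodWeight 1 (prodWeight 1 fun _ => 0)))

theorem mul_fiberSeries_gapWeight_eq_one :
    (1 - X ^ 3) * (1 - X) ^ 3 * fiberSeries gapWeight = (1 : PowerSeries ℤ) := by
  have h₀ : ∀ m, {x : Unit | 0 ≤ m}.Finite := fun m => Set.toFinite _
  have h₁ := finite_setOf_prodWeight_le one_pos h₀
  have h₂ := finite_setOf_prodWeight_le one_pos h₁
  have h₃ := finite_setOf_prodWeight_le one_pos h₂
  calc (1 - X ^ 3) * (1 - X) ^ 3 * fiberSeries gapWeight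
      = (1 - X ^ 1) * ((1 - X ^ 1) * ((1 - X ^ 1) * ((1 - X ^ 3) * fiberSeries gapWeight))) := by
        ring
    _ = 1 := by
      rw [gapWeight, one_sub_X_pow_mul_fiberSeries_prodWeight three_pos h₃,
        one_sub_X_pow_mul_fiberSeries_prodWeight one_pos h₂,
        one_sub_X_pow_mul_fiberSeries_prodWeight one_pos h₁,
        one_sub_X_pow_mul_fiberSeries_prodWeight one_pos h₀, fiberSeries_zero_unit]

theorem pnwd_four_eq_card (n : ℕ) : pnwd n 4 = Nat.card {q // gapWeight q + 4 = n} := by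
  symm
  refine Nat.card_eq_of_bijective
    (fun q => ⟨gapWord q.1.1 (q.1.1 + q.1.2.1) (q.1.1 + q.1.2.2.1) q.1.2.2.2.1, ?_,
      count_true_gapWord .., isPrefixNormal_gapWord_iff.mpr (by omega)⟩) ⟨?_, ?_⟩
  · have hq := q.2
    simp only [gapWeight, prodWeight] at hq
    rw [length_gapWord]
    omega
  · rintro ⟨⟨g, a, b, c, ⟨⟩⟩, _⟩ ⟨⟨g', a', b', c', ⟨⟩⟩, _⟩ h
    simp only [Subtype.mk.injEq] at h
    obtain ⟨rfl, e₂, e₃, rfl⟩ := gapWord_inj h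
    simp only [Subtype.mk.injEq, Prod.mk.injEq, true_and, and_true]
    omega
  · rintro ⟨w, rfl, hc, hw⟩
    obtain ⟨g₁, g₂, g₃, g₄, rfl⟩ := hw.exists_gapWord_eq hc
    obtain ⟨h₂, h₃⟩ := isPrefixNormal_gapWord_iff.mp hw
    refine ⟨⟨(g₁, g₂ - g₁, g₃ - g₁, g₄, ()), ?_⟩, ?_⟩
    · simp only [gapWeight, prodWeight, length_gapWord]
      omega
    · simp only [Subtype.mk.injEq]
      congr <;> omega

open PowerSeries in
theorem genFun_density_four :
    (1 - (X : PowerSeries ℤ) ^ 3) * (1 - X) ^ 3 *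
      PowerSeries.mk (fun n => if n = 0 then 0 else (pnwd n 4 : ℤ)) = X ^ 4 := by
  have hseries : PowerSeries.mk (fun n => if n = 0 then 0 else (pnwd n 4 : ℤ)) =
      fiberSeries (fun q => gapWeight q + 4) := by
    ext n
    simp only [coeff_mk, fiberSeries, pnwd_four_eq_card]
    split_ifs with hn
    · have : IsEmpty {q // gapWeight q + 4 = n} := ⟨fun q => by omega⟩
      simp
    · rfl
  rw [hseries, fiberSeries_add_const]
  calc (1 - X ^ 3) * (1 - X) ^ 3 * (X ^ 4 * fiberSeries gapWeight)
      = X ^ 4 * ((1 - X ^ 3) * (1 - X) ^ 3 * fiberSeries gapWeight) := by ring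
    _ = X ^ 4 := by rw [mul_fiberSeries_gapWeight_eq_one, mul_one]
end

section
/- For all n ≥ 3, the number of binary words w' of length n such that the concatenation 1^(n−2)·0·1·w' is prefix normal equals 2^n − 5. -/
/-- The number of prefix normal words of length `n`. -/
noncomputable def pnw (n : ℕ) : ℕ :=
  Nat.card {w : List Bool // w.length = n ∧ IsPrefixNormal w}

open List

theorem isPrefixNormal_iff_count_false {w : List Bool} :
    IsPrefixNormal w ↔ ∀ u, u <:+: w → (w.take u.length).count false ≤ u.count false := by
  refine forall₂_congr fun u hu => ?_
  have hlen : (w.take u.length).length = u.length := length_take_of_le hu.length_le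
  have := count_true_add_count_false u
  have := count_true_add_count_false (w.take u.length)
  omega

theorem count_false_take_replicate_true_append (s n : ℕ) (l : List Bool) :
    ((replicate s true ++ l).take n).count false = (l.take (n - s)).count false := by
  simp [take_append, take_replicate, count_replicate]

theorem count_false_pos_of_infix {m : ℕ} {u v : List Bool} (hrun : ¬replicate m true <:+: v)
    (hu : u <:+: v) (hm : m ≤ u.length) : 0 < u.count false := by
  by_contra! h
  have hones : u = replicate u.length true := by
    simpa [eq_replicate_iff, count_eq_zero] using h
  refine hrun (IsInfix.trans ?_ hu)
  rw [hones, show u.length = m + (u.length - m) by omega, replicate_add]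
  exact (prefix_append _ _).isInfix

theorem not_isPrefixNormal_of_replicate_infix {k : ℕ} {w : List Bool}
    (hrun : replicate (k + 2) true <:+: true :: w) :
    ¬IsPrefixNormal (replicate (k + 1) true ++ [false, true] ++ w) := by
  intro hpn
  have hsuf : true :: w <:+ replicate (k + 1) true ++ [false, true] ++ w :=
    ⟨replicate (k + 1) true ++ [false], by simp⟩
  have := hpn _ (hrun.trans hsuf.isInfix)
  simp [take_append, replicate_succ'] at this

theorem count_false_take_le_of_infix_true_cons {k : ℕ} {u w : List Bool} (hw : w.length ≤ k + 3)
    (hrun : ¬replicate (k + 2) true <:+: true :: w) (hu : u <:+: true :: w) :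
    ((replicate (k + 1) true ++ [false, true] ++ w).take u.length).count false ≤
      u.count false := by
  rw [append_assoc, count_false_take_replicate_true_append]
  rcases lt_or_ge u.length (k + 2) with hshort | hlong
  · simp [show u.length - (k + 1) = 0 by omega]
  have hzero := count_false_pos_of_infix hrun hu hlong
  rcases lt_or_ge u.length (k + 4) with hmid | hfull
  · calc (([false, true] ++ w).take (u.length - (k + 1))).count false
        ≤ (([false, true] ++ w).take 2).count false :=
          (take_prefix_take_left (by omega)).count_le _
      _ = 1 := by simp
      _ ≤ u.count false := hzero
  · -- `u` is all of `1 w`: the prefix's zero at position `k + 1` is matched by one in `w.drop 1`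
    have hw3 : w.length = k + 3 := by have := hu.length_le; rw [length_cons] at this; omega
    obtain rfl : u = true :: w :=
      hu.eq_of_length (hu.length_le.antisymm (by rw [length_cons]; omega))
    have htail : 0 < (w.drop 1).count false :=
      count_false_pos_of_infix hrun (drop_suffix 2 (true :: w)).isInfix (by simp [hw3])
    calc (([false, true] ++ w).take ((true :: w).length - (k + 1))).count false
        = (w.take 1).count false + 1 := by
          rw [length_cons, hw3, show k + 3 + 1 - (k + 1) = 3 by omega]
          simp
      _ ≤ (w.take 1).count false + (w.drop 1).count false := by omega
      _ = (true :: w).count false := by rw [← count_append, take_append_drop]; simp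

theorem isPrefixNormal_of_not_replicate_infix {k : ℕ} {w : List Bool} (hw : w.length ≤ k + 3)
    (hrun : ¬replicate (k + 2) true <:+: true :: w) :
    IsPrefixNormal (replicate (k + 1) true ++ [false, true] ++ w) := by
  rw [isPrefixNormal_iff_count_false]
  rintro u ⟨a, b, hab⟩
  rcases le_or_gt a.length (k + 1) with hshift | htail
  · have hones : a = replicate a.length true := by
      have : a <+: replicate (k + 1) true ++ [false, true] ++ w := ⟨u ++ b, by simp [← hab]⟩
      rw [prefix_iff_eq_take] at this
      rw [this]
      simp [take_append, take_replicate, hshift]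
    rw [← hab, hones, append_assoc, count_false_take_replicate_true_append]
    calc ((u ++ b).take (u.length - a.length)).count false
        ≤ ((u ++ b).take u.length).count false := (take_prefix_take_left (by omega)).count_le _
      _ = u.count false := by simp
  · refine count_false_take_le_of_infix_true_cons hw hrun ⟨a.drop (k + 2), b, ?_⟩
    have := congrArg (drop (k + 2)) hab
    rw [append_assoc, drop_append_of_le_length (by omega)] at this
    simpa [drop_append, replicate_succ'] using this

theorem isPrefixNormal_replicate_append_iff {k : ℕ} {w : List Bool} (hw : w.length ≤ k + 3) :
    IsPrefixNormal (replicate (k + 1) true ++ [false, true] ++ w) ↔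
      ¬replicate (k + 2) true <:+: true :: w :=
  ⟨fun hpn hrun => not_isPrefixNormal_of_replicate_infix hrun hpn,
    isPrefixNormal_of_not_replicate_infix hw⟩

theorem replicate_infix_true_cons_iff {k : ℕ} {w : List Bool} (hw : w.length = k + 3) :
    replicate (k + 2) true <:+: true :: w ↔
      w = false :: replicate (k + 2) true ∨ ∃ x y, replicate (k + 1) true ++ [x, y] = w := by
  constructor
  · rintro ⟨a, b, hab⟩
    have hlen : a.length + b.length = 2 := by
      have := congrArg length hab
      simp only [length_append, length_replicate, length_cons, hw] at this
      omega
    rcases a with _ | ⟨c, _ | ⟨d, _ | ⟨e, a⟩⟩⟩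
    · obtain ⟨x, y, rfl⟩ := (length_eq_two (l := b)).mp (by simpa using hlen)
      exact Or.inr ⟨x, y, (cons.inj hab).2⟩
    · obtain ⟨y, rfl⟩ := (length_eq_one_iff (l := b)).mp
        (by simp only [length_cons, length_nil] at hlen; omega)
      exact Or.inr ⟨true, y, by simpa [replicate_succ'] using (cons.inj hab).2⟩
    · obtain rfl : b = [] :=
        length_eq_zero_iff.mp (by simp only [length_cons, length_nil] at hlen; omega)
      simp only [cons_append, nil_append, append_nil, cons.injEq] at hab
      rcases hab with ⟨-, rfl⟩
      cases d
      · exact Or.inl rfl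
      · exact Or.inr ⟨true, true, (replicate_add (k + 1) 2 true).symm⟩
    · simp only [length_cons] at hlen; omega
  · rintro (rfl | ⟨x, y, rfl⟩)
    · exact (suffix_append [true, false] _).isInfix
    · exact ⟨[], [x, y], by simp [replicate_succ]⟩

theorem ncard_setOf_length_eq (α : Type*) [Fintype α] (n : ℕ) :
    {l : List α | l.length = n}.ncard = Fintype.card α ^ n :=
  (Nat.card_eq_fintype_card (α := List.Vector α n)).trans (card_vector n)

theorem ncard_setOf_replicate_infix_true_cons (k : ℕ) :
    {w : List Bool | w.length = k + 3 ∧ replicate (k + 2) true <:+: true :: w}.ncard = 5 := by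
  have hset : {w : List Bool | w.length = k + 3 ∧ replicate (k + 2) true <:+: true :: w} =
      insert (false :: replicate (k + 2) true)
        (Set.range fun xy : Bool × Bool => replicate (k + 1) true ++ [xy.1, xy.2]) := by
    ext w
    simp only [Set.mem_ofPred_eq, Set.mem_insert_iff, Set.mem_range, Prod.exists]
    constructor
    · rintro ⟨hw, hrun⟩
      exact (replicate_infix_true_cons_iff hw).mp hrun
    · intro h
      have hw : w.length = k + 3 := by rcases h with rfl | ⟨x, y, rfl⟩ <;> simp
      exact ⟨hw, (replicate_infix_true_cons_iff hw).mpr h⟩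
  have hinj :
      Function.Injective fun xy : Bool × Bool => replicate (k + 1) true ++ [xy.1, xy.2] := by
    rintro ⟨x, y⟩ ⟨x', y'⟩ h
    simpa using h
  rw [hset, Set.ncard_insert_of_notMem, Set.ncard_range_of_injective hinj]
  · simp
  · rintro ⟨⟨x, y⟩, h⟩
    simp [replicate_succ] at h

theorem ext_ones_zero_one (n : ℕ) (hn : 3 ≤ n) :
    Nat.card {w' : List Bool // w'.length = n ∧
        IsPrefixNormal (List.replicate (n - 2) true ++ [false, true] ++ w')} =
      2 ^ n - 5 := by
  obtain ⟨k, rfl⟩ : ∃ k, n = k + 3 := ⟨n - 3, by omega⟩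
  rw [show k + 3 - 2 = k + 1 by omega]
  have hgood : {w : List Bool | w.length = k + 3 ∧
      IsPrefixNormal (replicate (k + 1) true ++ [false, true] ++ w)} =
      {w | w.length = k + 3} \
        {w | w.length = k + 3 ∧ replicate (k + 2) true <:+: true :: w} := by
    ext w
    simp only [Set.mem_ofPred_eq, Set.mem_sdiff, not_and]
    exact and_congr_right fun hw => (isPrefixNormal_replicate_append_iff hw.le).trans
      ⟨fun hrun _ => hrun, fun hrun => hrun hw⟩
  rw [← Set.coe_ofPred, Nat.card_coe_set_eq, hgood, Set.ncard_sdiff (fun _ hw => hw.1)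
      ((finite_length_eq Bool (k + 3)).subset fun _ hw => hw.1),
    ncard_setOf_length_eq, ncard_setOf_replicate_infix_true_cons, Fintype.card_bool]
end

section
/- For all n ≥ 2, the numbers of prefix normal words satisfy the recurrence pnw(n) = 2·pnw(n−1) − crit(n−1), where crit(m) is the number of extension-critical prefix normal words of length m. -/
/-- The number of extension-critical prefix normal words of length `n`:
prefix normal words `w` such that `w1` is not prefix normal. -/
noncomputable def crit (n : ℕ) : ℕ :=
  Nat.card {w : List Bool // w.length = n ∧ IsPrefixNormal w ∧
    ¬ IsPrefixNormal (w ++ [true])}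

theorem List.finite_setOf_length_eq_and {α : Type*} [Finite α] (P : List α → Prop) (m : ℕ) :
    {v : List α | v.length = m ∧ P v}.Finite :=
  (List.finite_length_eq α m).subset fun _ hv => hv.1

theorem IsPrefixNormal.of_append {v w : List Bool} (h : IsPrefixNormal (v ++ w)) :
    IsPrefixNormal v := fun u hu => by
  simpa only [List.take_append_of_le_length hu.length_le] using
    h u (hu.trans (List.prefix_append v w).isInfix)

theorem IsPrefixNormal.append_false {v : List Bool} (h : IsPrefixNormal v) :
    IsPrefixNormal (v ++ [false]) := by
  intro u hu
  rcases List.infix_concat_iff.1 hu with hsuf | hinf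
  · obtain rfl | ⟨t, rfl, ht⟩ := List.suffix_concat_iff.1 hsuf
    · simp
    have hprefix : v.take t.length <+: (v ++ [false]).take (t ++ [false]).length := by
      rw [← List.take_append_of_le_length ht.length_le]
      exact List.take_prefix_take_left (by simp)
    calc (t ++ [false]).count true = t.count true := by simp
      _ ≤ (v.take t.length).count true := h t ht.isInfix
      _ ≤ _ := hprefix.sublist.count_le true
  · rw [List.take_append_of_le_length hinf.length_le]
    exact h u hinf

theorem isPrefixNormal_append_false_iff {v : List Bool} :
    IsPrefixNormal (v ++ [false]) ↔ IsPrefixNormal v :=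
  ⟨IsPrefixNormal.of_append, IsPrefixNormal.append_false⟩

theorem List.ncard_setOf_length_succ_bool (P : List Bool → Prop) (m : ℕ) :
    {w : List Bool | w.length = m + 1 ∧ P w}.ncard =
      {v : List Bool | v.length = m ∧ P (v ++ [true])}.ncard +
        {v : List Bool | v.length = m ∧ P (v ++ [false])}.ncard := by
  set A : Bool → Set (List Bool) := fun b => {v | v.length = m ∧ P (v ++ [b])}
  have hfinite (b : Bool) : (A b).Finite := finite_setOf_length_eq_and _ m
  have hsplit : {w : List Bool | w.length = m + 1 ∧ P w} =
      (fun v => v ++ [true]) '' A true ∪ (fun v => v ++ [false]) '' A false := by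
    ext w
    constructor
    · rintro ⟨hlen, hw⟩
      rcases w.eq_nil_or_concat' with rfl | ⟨v, b, rfl⟩
      · simp at hlen
      have hv : v.length = m := by simpa using hlen
      cases b
      · exact Or.inr ⟨v, ⟨hv, hw⟩, rfl⟩
      · exact Or.inl ⟨v, ⟨hv, hw⟩, rfl⟩
    · rintro (⟨v, ⟨hv, hP⟩, rfl⟩ | ⟨v, ⟨hv, hP⟩, rfl⟩) <;> exact ⟨by simp [hv], hP⟩
  have hdisjoint :
      _root_.Disjoint ((fun v => v ++ [true]) '' A true) ((fun v => v ++ [false]) '' A false) := by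
    rw [Set.disjoint_left]
    rintro _ ⟨v, _, rfl⟩ ⟨v', _, h⟩
    simpa using congrArg List.getLast? h
  rw [hsplit, Set.ncard_union_eq hdisjoint ((hfinite _).image _) ((hfinite _).image _),
    Set.ncard_image_of_injective _ (List.append_left_injective _),
    Set.ncard_image_of_injective _ (List.append_left_injective _)]

theorem pnw_eq_ncard (n : ℕ) : pnw n = {w : List Bool | w.length = n ∧ IsPrefixNormal w}.ncard :=
  Nat.card_coe_set_eq _

theorem crit_eq_ncard (n : ℕ) :
    crit n = {w : List Bool | w.length = n ∧ IsPrefixNormal w ∧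
      ¬ IsPrefixNormal (w ++ [true])}.ncard :=
  Nat.card_coe_set_eq _

theorem pnw_succ (m : ℕ) :
    pnw (m + 1) = {v : List Bool | v.length = m ∧ IsPrefixNormal (v ++ [true])}.ncard + pnw m := by
  simp only [pnw_eq_ncard, List.ncard_setOf_length_succ_bool, isPrefixNormal_append_false_iff]

theorem pnw_eq_add_crit (m : ℕ) :
    pnw m = {v : List Bool | v.length = m ∧ IsPrefixNormal (v ++ [true])}.ncard + crit m := by
  set S := {v : List Bool | v.length = m ∧ IsPrefixNormal v}
  set T := {v : List Bool | IsPrefixNormal (v ++ [true])}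
  have hextensible : {v : List Bool | v.length = m ∧ IsPrefixNormal (v ++ [true])} = S ∩ T := by
    ext v
    exact ⟨fun ⟨hv, h⟩ => ⟨⟨hv, h.of_append⟩, h⟩, fun ⟨⟨hv, _⟩, h⟩ => ⟨hv, h⟩⟩
  have hcritical : {w : List Bool | w.length = m ∧ IsPrefixNormal w ∧
      ¬ IsPrefixNormal (w ++ [true])} = S \ T := by
    ext v
    exact and_assoc.symm
  rw [pnw_eq_ncard, crit_eq_ncard, hextensible, hcritical,
    Set.ncard_inter_add_ncard_sdiff_eq_ncard _ _ (List.finite_setOf_length_eq_and _ m)]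

theorem pnw_recurrence (n : ℕ) (hn : 2 ≤ n) :
    pnw n = 2 * pnw (n - 1) - crit (n - 1) := by
  obtain ⟨m, rfl⟩ : ∃ m, n = m + 1 := ⟨n - 1, by omega⟩
  have hsucc := pnw_succ m
  have hcrit := pnw_eq_add_crit m
  rw [Nat.add_sub_cancel]
  omega
end
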